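/- Let w be a word over Ū_H ∪ {t, t⁻¹} in HNN reduced form and let V ⊆ Ū_H be such that w is a word over V ∪ {t, t⁻¹}. Then there is some word v′ over V ∪ {t, t⁻¹} with v′ ∈ MRF(w). -/

import Mathlib

/-- `S` is a free basis of the group `G`: the induced map from the free group
on `S` is an isomorphism. -/
def IsFreeBasis {G : Type*} [Group G] (S : Set G) : Prop :=
  Function.Bijective ⇑(FreeGroup.lift (Subtype.val : S → G))

/-- Letters of words over `Ū_H ∪ {t, t⁻¹}`: an element of the free group `H`
(intended to lie in `Ū_H`), the stable letter `t`, or its inverse. -/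
inductive HLetter (X : Type*) where
  | gen : FreeGroup X → HLetter X
  | t : HLetter X
  | tinv : HLetter X

namespace HnnPaper

variable {X : Type*}

/-- A word `w` is a word over `S ∪ {t, t⁻¹}` if all its group letters lie in `S`. -/
def WordOver (S : Set (FreeGroup X)) (w : List (HLetter X)) : Prop :=
  ∀ l ∈ w, ∀ u : FreeGroup X, l = HLetter.gen u → u ∈ S

/-- A word consisting only of group letters (no `t`, `t⁻¹`). -/
def IsGenOnly (w : List (HLetter X)) : Prop :=
  ∀ l ∈ w, ∃ u : FreeGroup X, l = HLetter.gen u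

/-- The element of `H` represented by a `t`-free word (treats `t`-letters as `1`). -/
def evalH (w : List (HLetter X)) : FreeGroup X :=
  (w.map fun l => match l with
    | HLetter.gen u => u
    | _ => 1).prod

/-- `w` is in HNN reduced form: it has no subword `t⁻¹ w_i t` with `w_i` a `t`-free
word representing an element of `A = ⟨U_A⟩`, and no subword `t w_i t⁻¹` with `w_i`
a `t`-free word representing an element of `B = ⟨U_B⟩`. -/
def HNNReducedWord (UA UB : Set (FreeGroup X)) (w : List (HLetter X)) : Prop :=
  (∀ p mid s, w = p ++ [HLetter.tinv] ++ mid ++ [HLetter.t] ++ s →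
      IsGenOnly mid → evalH mid ∉ Subgroup.closure UA) ∧
  (∀ p mid s, w = p ++ [HLetter.t] ++ mid ++ [HLetter.tinv] ++ s →
      IsGenOnly mid → evalH mid ∉ Subgroup.closure UB)

variable {UA UB : Set (FreeGroup X)}

/-- The element of the HNN extension `H* = H ∗_{t,φ:A→B}` represented by a word. -/
def evalStar (φ : ↥(Subgroup.closure UA) ≃* ↥(Subgroup.closure UB))
    (w : List (HLetter X)) :
    HNNExtension (FreeGroup X) (Subgroup.closure UA) (Subgroup.closure UB) φ :=
  (w.map fun l => match l with
    | HLetter.gen u => HNNExtension.of u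
    | HLetter.t => HNNExtension.t
    | HLetter.tinv => HNNExtension.t⁻¹).prod

/-- Elementary addition: insertion of a pair `u u⁻¹` with `u ∈ Ū_H`. -/
def ElemAdd (UH : Set (FreeGroup X)) (w w' : List (HLetter X)) : Prop :=
  ∃ (p s : List (HLetter X)) (u : FreeGroup X), u ∈ UH ∪ UH⁻¹ ∧ w = p ++ s ∧
    w' = p ++ [HLetter.gen u, HLetter.gen u⁻¹] ++ s

/-- Elementary cancellation: deletion of a pair `u u⁻¹` with `u ∈ Ū_H`. -/
def ElemDel (UH : Set (FreeGroup X)) (w w' : List (HLetter X)) : Prop :=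
  ElemAdd UH w' w

/-- Elementary semicommutation: replacement of `u_a t` by `t u_b`, or of `t⁻¹ u_a`
by `u_b t⁻¹` (or conversely in either case), where `u_a ∈ Ū_A`, `u_b ∈ Ū_B` and
`φ(u_a) = u_b`. -/
def ElemSemi (φ : ↥(Subgroup.closure UA) ≃* ↥(Subgroup.closure UB))
    (w w' : List (HLetter X)) : Prop :=
  ∃ (p s : List (HLetter X)) (a : ↥(Subgroup.closure UA)), (a : FreeGroup X) ∈ UA ∪ UA⁻¹ ∧
    ((w = p ++ [HLetter.gen ↑a, HLetter.t] ++ s ∧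
      w' = p ++ [HLetter.t, HLetter.gen ↑(φ a)] ++ s) ∨
     (w = p ++ [HLetter.t, HLetter.gen ↑(φ a)] ++ s ∧
      w' = p ++ [HLetter.gen ↑a, HLetter.t] ++ s) ∨
     (w = p ++ [HLetter.tinv, HLetter.gen ↑a] ++ s ∧
      w' = p ++ [HLetter.gen ↑(φ a), HLetter.tinv] ++ s) ∨
     (w = p ++ [HLetter.gen ↑(φ a), HLetter.tinv] ++ s ∧
      w' = p ++ [HLetter.tinv, HLetter.gen ↑a] ++ s))

/-- An elementary operation: an elementary addition, cancellation or semicommutation. -/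
def ElemOp (UH : Set (FreeGroup X)) (φ : ↥(Subgroup.closure UA) ≃* ↥(Subgroup.closure UB))
    (w w' : List (HLetter X)) : Prop :=
  ElemAdd UH w w' ∨ ElemDel UH w w' ∨ ElemSemi φ w w'

/-- `w ∼ w'`: a finite sequence of elementary semicommutations turns `w` into `w'`. -/
def Sim (φ : ↥(Subgroup.closure UA) ≃* ↥(Subgroup.closure UB)) :
    List (HLetter X) → List (HLetter X) → Prop :=
  Relation.ReflTransGen (ElemSemi φ)

/-- The word `t^n` (a run of `t`'s or of `t⁻¹`'s). -/
def tPow (n : ℤ) : List (HLetter X) :=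
  if 0 ≤ n then List.replicate n.toNat HLetter.t
  else List.replicate (-n).toNat HLetter.tinv

/-- The word `t^{n₀} u₁ t^{n₁} ⋯ u_k t^{n_k}` determined by `n₀` and the list
`[(u₁,n₁),…,(u_k,n_k)]`. -/
def blockWord (n0 : ℤ) (l : List (FreeGroup X × ℤ)) : List (HLetter X) :=
  tPow n0 ++ l.flatMap (fun p => HLetter.gen p.1 :: tPow p.2)

/-- `w →_m v`: `w ≡ t^{n₀} u₁ t^{n₁} ⋯ u_k t^{n_k}` with `u_{m+1} ≡ u_m⁻¹` and
`n_m = 0`, and `v` is obtained from `w` by the elementary cancellation of the pair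
`u_m u_{m+1}` (so `t^{n_{m-1}}` becomes `t^{n_{m-1}+n_{m+1}}`). -/
def CancelAt (m : ℕ) (w v : List (HLetter X)) : Prop :=
  ∃ (n0 : ℤ) (pre post : List (FreeGroup X × ℤ)) (u : FreeGroup X) (n' : ℤ),
    pre.length + 1 = m ∧
    w = blockWord n0 (pre ++ [(u, 0), (u⁻¹, n')] ++ post) ∧
    ((pre = [] ∧ v = blockWord (n0 + n') post) ∨
     (∃ pre' u' nl, pre = pre' ++ [(u', nl)] ∧
        v = blockWord n0 (pre' ++ [(u', nl + n')] ++ post)))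

/-- `w ⇝_m v`: there are HNN reduced words `w′, v′` with `w ∼ w′ →_m v′ ∼ v`. -/
def RsaAt (φ : ↥(Subgroup.closure UA) ≃* ↥(Subgroup.closure UB)) (m : ℕ)
    (w v : List (HLetter X)) : Prop :=
  ∃ w' v', HNNReducedWord UA UB w' ∧ HNNReducedWord UA UB v' ∧
    Sim φ w w' ∧ CancelAt m w' v' ∧ Sim φ v' v

/-- `w ⇝ v`: `w ⇝_m v` for some `m`. -/
def Rsa (φ : ↥(Subgroup.closure UA) ≃* ↥(Subgroup.closure UB))
    (w v : List (HLetter X)) : Prop :=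
  ∃ m, RsaAt φ m w v

/-- `w ≿ v`: either `w ∼ v` or there is a sequence `w ≡ w₀ ⇝ w₁ ⇝ ⋯ ⇝ w_k ≡ v`
with `k ≥ 1`. -/
def Succsim (φ : ↥(Subgroup.closure UA) ≃* ↥(Subgroup.closure UB))
    (w v : List (HLetter X)) : Prop :=
  Sim φ w v ∨ Relation.TransGen (Rsa φ) w v

/-- `v` is in most reduced form: it is HNN reduced and no `v ⇝ v'` is possible. -/
def MostReduced (φ : ↥(Subgroup.closure UA) ≃* ↥(Subgroup.closure UB))
    (v : List (HLetter X)) : Prop :=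
  HNNReducedWord UA UB v ∧ ∀ v', ¬ Rsa φ v v'

/-- `MRF(w)`: the set of words `v` with `v ≾ w` that are in most reduced form. -/
def MRF (φ : ↥(Subgroup.closure UA) ≃* ↥(Subgroup.closure UB))
    (w : List (HLetter X)) : Set (List (HLetter X)) :=
  {v | Succsim φ w v ∧ MostReduced φ v}

/-- The partial bijection `Ū_A → Ū_B` induced by `φ`, as a relation on `H`. -/
def PhiRel (φ : ↥(Subgroup.closure UA) ≃* ↥(Subgroup.closure UB))
    (u v : FreeGroup X) : Prop :=
  ∃ a : ↥(Subgroup.closure UA), (a : FreeGroup X) ∈ UA ∪ UA⁻¹ ∧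
    (a : FreeGroup X) = u ∧ ((φ a : ↥(Subgroup.closure UB)) : FreeGroup X) = v

/-- `v = φ^n(u)` for `n ∈ ℕ`. -/
def PhiPowN (φ : ↥(Subgroup.closure UA) ≃* ↥(Subgroup.closure UB)) :
    ℕ → FreeGroup X → FreeGroup X → Prop
  | 0 => Eq
  | (n + 1) => fun u v => ∃ w, PhiPowN φ n u w ∧ PhiRel φ w v

/-- `v = φ^z(u)` for `z ∈ ℤ`. -/
def PhiZPow (φ : ↥(Subgroup.closure UA) ≃* ↥(Subgroup.closure UB)) (z : ℤ)
    (u v : FreeGroup X) : Prop :=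
  if 0 ≤ z then PhiPowN φ z.toNat u v else PhiPowN φ (-z).toNat v u

end HnnPaper

open HnnPaper

/-!
Induction on the number of group letters. Semicommutations preserve HNN reducedness (they change
the middle of a pinch only by a factor from `A` or `B`) and never reorder the group letters. So if
`w ∼ w′ →_m v′ ∼ v`, the cancelled pair of `w′` sits at the same indices `m, m + 1` among the group
letters of `w`, and erasing these two letters commutes with semicommutation: erasing them from `w`
gives a word `∼ v′`, hence a step `w ⇝ v₀`, and `v₀` uses only letters of `w`, so it is a word
over `V` with fewer group letters.
-/

namespace List

variable {α : Type*}

lemma overlap_pair_singleton {q r M s : List α} {c d y : α}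
    (h : q ++ [c, d] ++ r = M ++ [y] ++ s) :
    (∃ m₂, M = q ++ [c, d] ++ m₂ ∧ r = m₂ ++ [y] ++ s) ∨
    (M = q ++ [c] ∧ d = y ∧ r = s) ∨
    (q = M ∧ c = y ∧ s = d :: r) ∨
    (∃ s₁, s = s₁ ++ [c, d] ++ r ∧ q = M ++ [y] ++ s₁) := by
  induction q generalizing M with
  | nil =>
    match M with
    | [] => simp_all
    | [m] =>
      obtain ⟨rfl, rfl, rfl⟩ : c = m ∧ d = y ∧ r = s := by simpa using h
      simp
    | m₁ :: m₂ :: M' =>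
      obtain ⟨rfl, rfl, hr⟩ : c = m₁ ∧ d = m₂ ∧ r = M' ++ y :: s := by simpa using h
      exact Or.inl ⟨M', by simp, by simp [hr]⟩
  | cons a q ih =>
    match M with
    | [] =>
      obtain ⟨rfl, hs⟩ : a = y ∧ q ++ c :: d :: r = s := by simpa using h
      exact Or.inr (Or.inr (Or.inr ⟨q, by simp [← hs], by simp⟩))
    | m :: M' =>
      obtain ⟨rfl, h'⟩ : a = m ∧ q ++ [c, d] ++ r = M' ++ [y] ++ s := by simpa using h
      rcases ih h' with ⟨m₂, rfl, hr⟩ | ⟨rfl, rfl, rfl⟩ | ⟨rfl, rfl, rfl⟩ | ⟨s₁, rfl, rfl⟩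
      · exact Or.inl ⟨m₂, by simp, hr⟩
      · simp
      · simp
      · exact Or.inr (Or.inr (Or.inr ⟨s₁, rfl, by simp⟩))

lemma overlap_pair_bracket {q r p mid s : List α} {c d x y : α}
    (h : q ++ [c, d] ++ r = p ++ [x] ++ mid ++ [y] ++ s) :
    (∃ p₂, p = q ++ [c, d] ++ p₂ ∧ r = p₂ ++ [x] ++ mid ++ [y] ++ s) ∨
    (p = q ++ [c] ∧ d = x ∧ r = mid ++ [y] ++ s) ∨
    (q = p ∧ c = x ∧ ∃ m₂, mid = d :: m₂ ∧ r = m₂ ++ [y] ++ s) ∨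
    (q = p ∧ c = x ∧ mid = [] ∧ d = y ∧ r = s) ∨
    (∃ m₁ m₂, mid = m₁ ++ [c, d] ++ m₂ ∧ q = p ++ [x] ++ m₁ ∧ r = m₂ ++ [y] ++ s) ∨
    (∃ m₁, mid = m₁ ++ [c] ∧ q = p ++ [x] ++ m₁ ∧ d = y ∧ r = s) ∨
    (q = p ++ [x] ++ mid ∧ c = y ∧ s = d :: r) ∨
    (∃ s₁, s = s₁ ++ [c, d] ++ r ∧ q = p ++ [x] ++ mid ++ [y] ++ s₁) := by
  rcases overlap_pair_singleton h with ⟨m₂, hM, hr⟩ | ⟨hM, rfl, rfl⟩ | ⟨rfl, rfl, rfl⟩ |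
      ⟨s₁, rfl, rfl⟩
  · rcases overlap_pair_singleton hM.symm with ⟨p₂, hp, hm⟩ | ⟨hp, rfl, rfl⟩ |
        ⟨rfl, rfl, rfl⟩ | ⟨m₁, rfl, rfl⟩
    · exact Or.inl ⟨p₂, hp, by simp [hr, hm]⟩
    · exact Or.inr (Or.inl ⟨hp, rfl, hr⟩)
    · exact Or.inr (Or.inr (Or.inl ⟨rfl, rfl, m₂, rfl, hr⟩))
    · exact Or.inr (Or.inr (Or.inr (Or.inr (Or.inl ⟨m₁, m₂, rfl, rfl, hr⟩))))
  · rcases mid.eq_nil_or_concat' with rfl | ⟨m₁, c', rfl⟩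
    · obtain ⟨rfl, rfl⟩ : p = q ∧ x = c := by simpa using hM
      exact Or.inr (Or.inr (Or.inr (Or.inl ⟨rfl, rfl, rfl, rfl, rfl⟩)))
    · obtain ⟨rfl, hc⟩ := List.append_inj' (by simpa using hM : p ++ [x] ++ m₁ ++ [c'] = q ++ [c])
        (by simp)
      obtain rfl := List.singleton_inj.mp hc
      exact Or.inr (Or.inr (Or.inr (Or.inr (Or.inr (Or.inl ⟨m₁, rfl, rfl, rfl, rfl⟩)))))
  · exact Or.inr (Or.inr (Or.inr (Or.inr (Or.inr (Or.inr (Or.inl ⟨rfl, rfl, rfl⟩))))))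
  · exact Or.inr (Or.inr (Or.inr (Or.inr (Or.inr (Or.inr (Or.inr ⟨s₁, rfl, by simp⟩))))))

end List

namespace HnnPaper

variable {X : Type*}

section Letters

@[simp] lemma evalH_nil : evalH ([] : List (HLetter X)) = 1 := rfl

@[simp] lemma evalH_cons_gen (u : FreeGroup X) (w : List (HLetter X)) :
    evalH (HLetter.gen u :: w) = u * evalH w := by
  simp [evalH]

@[simp] lemma evalH_append (w w' : List (HLetter X)) :
    evalH (w ++ w') = evalH w * evalH w' := by
  simp [evalH]

@[simp] lemma isGenOnly_nil : IsGenOnly ([] : List (HLetter X)) := by simp [IsGenOnly]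

@[simp] lemma isGenOnly_cons_gen {u : FreeGroup X} {w : List (HLetter X)} :
    IsGenOnly (HLetter.gen u :: w) ↔ IsGenOnly w := by
  simp [IsGenOnly]

@[simp] lemma isGenOnly_append {w w' : List (HLetter X)} :
    IsGenOnly (w ++ w') ↔ IsGenOnly w ∧ IsGenOnly w' :=
  List.forall_mem_append

lemma IsGenOnly.not_mem {w : List (HLetter X)} {c : HLetter X} (h : IsGenOnly w)
    (hc : ∀ u, HLetter.gen u ≠ c) : c ∉ w := fun hw ↦ by
  obtain ⟨u, rfl⟩ := h c hw
  exact hc u rfl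

end Letters

section Pinch

variable {c₁ c₂ c : HLetter X} {K : Subgroup (FreeGroup X)} {g g' : FreeGroup X}
  {q r : List (HLetter X)}

def NoPinch (c₁ c₂ : HLetter X) (K : Subgroup (FreeGroup X)) (w : List (HLetter X)) : Prop :=
  ∀ p mid s, w = p ++ [c₁] ++ mid ++ [c₂] ++ s → IsGenOnly mid → evalH mid ∉ K

lemma hnnReducedWord_iff_noPinch {UA UB : Set (FreeGroup X)} {w : List (HLetter X)} :
    HNNReducedWord UA UB w ↔
      NoPinch .tinv .t (Subgroup.closure UA) w ∧ NoPinch .t .tinv (Subgroup.closure UB) w :=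
  Iff.rfl

/- A pinch `c₁ mid c₂` of the new word either is one of the old word, or its middle differs
from the middle of one by the letter `g` (when `c = c₂`) or `g'` (when `c = c₁`). -/
lemma NoPinch.swap_gen_right (h : NoPinch c₁ c₂ K (q ++ [HLetter.gen g, c] ++ r))
    (h₁ : ∀ u, HLetter.gen u ≠ c₁) (h₂ : ∀ u, HLetter.gen u ≠ c₂) (hc : ∀ u, HLetter.gen u ≠ c)
    (hg : c₂ = c → g ∈ K) (hg' : c₁ = c → g' ∈ K) :
    NoPinch c₁ c₂ K (q ++ [c, HLetter.gen g'] ++ r) := by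
  intro p mid s hw hmid hK
  rcases List.overlap_pair_bracket hw with ⟨p₂, rfl, rfl⟩ | ⟨-, hx, -⟩ |
      ⟨rfl, rfl, m₂, rfl, rfl⟩ | ⟨-, -, -, hy, -⟩ | ⟨m₁, m₂, rfl, -, -⟩ | ⟨m₁, rfl, -, -, -⟩ |
      ⟨rfl, rfl, rfl⟩ | ⟨s₁, rfl, rfl⟩
  · exact h (q ++ [HLetter.gen g, c] ++ p₂) mid s (by simp) hmid hK
  · exact h₁ _ hx
  · exact h (q ++ [HLetter.gen g]) m₂ s (by simp) (by simpa using hmid)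
      ((K.mul_mem_cancel_left (hg' rfl)).mp (by simpa using hK))
  · exact h₂ _ hy
  · exact hmid.not_mem hc (by simp)
  · exact hmid.not_mem hc (by simp)
  · exact h p (mid ++ [HLetter.gen g]) r (by simp) (by simpa using hmid)
      (by simpa using K.mul_mem hK (hg rfl))
  · exact h p mid (s₁ ++ [HLetter.gen g, c] ++ r) (by simp) hmid hK

lemma NoPinch.swap_gen_left (h : NoPinch c₁ c₂ K (q ++ [c, HLetter.gen g'] ++ r))
    (h₁ : ∀ u, HLetter.gen u ≠ c₁) (h₂ : ∀ u, HLetter.gen u ≠ c₂) (hc : ∀ u, HLetter.gen u ≠ c)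
    (hg : c₂ = c → g ∈ K) (hg' : c₁ = c → g' ∈ K) :
    NoPinch c₁ c₂ K (q ++ [HLetter.gen g, c] ++ r) := by
  intro p mid s hw hmid hK
  rcases List.overlap_pair_bracket hw with ⟨p₂, rfl, rfl⟩ | ⟨rfl, rfl, rfl⟩ |
      ⟨-, hx, -⟩ | ⟨-, hx, -⟩ | ⟨m₁, m₂, rfl, -, -⟩ | ⟨m₁, rfl, rfl, rfl, rfl⟩ |
      ⟨-, hy, -⟩ | ⟨s₁, rfl, rfl⟩
  · exact h (q ++ [c, HLetter.gen g'] ++ p₂) mid s (by simp) hmid hK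
  · exact h q (HLetter.gen g' :: mid) s (by simp) (by simpa using hmid)
      (by simpa using K.mul_mem (hg' rfl) hK)
  · exact h₁ _ hx
  · exact h₁ _ hx
  · exact hmid.not_mem hc (by simp)
  · exact h p m₁ (HLetter.gen g' :: r) (by simp) (by simpa using hmid)
      ((K.mul_mem_cancel_right (hg rfl)).mp (by simpa using hK))
  · exact h₂ _ hy
  · exact h p mid (s₁ ++ [c, HLetter.gen g'] ++ r) (by simp) hmid hK

end Pinch

section Semicommutation

variable {UA UB : Set (FreeGroup X)} {φ : ↥(Subgroup.closure UA) ≃* ↥(Subgroup.closure UB)}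
  {w w' : List (HLetter X)}

lemma ElemSemi.hnnReducedWord (h : ElemSemi φ w w') (hw : HNNReducedWord UA UB w) :
    HNNReducedWord UA UB w' := by
  obtain ⟨q, r, a, -, hqr⟩ := h
  obtain ⟨hA, hB⟩ := hnnReducedWord_iff_noPinch.1 hw
  rw [hnnReducedWord_iff_noPinch]
  rcases hqr with ⟨rfl, rfl⟩ | ⟨rfl, rfl⟩ | ⟨rfl, rfl⟩ | ⟨rfl, rfl⟩
  · refine ⟨hA.swap_gen_right ?_ ?_ ?_ ?_ ?_, hB.swap_gen_right ?_ ?_ ?_ ?_ ?_⟩ <;> simp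
  · refine ⟨hA.swap_gen_left ?_ ?_ ?_ ?_ ?_, hB.swap_gen_left ?_ ?_ ?_ ?_ ?_⟩ <;> simp
  · refine ⟨hA.swap_gen_left ?_ ?_ ?_ ?_ ?_, hB.swap_gen_left ?_ ?_ ?_ ?_ ?_⟩ <;> simp
  · refine ⟨hA.swap_gen_right ?_ ?_ ?_ ?_ ?_, hB.swap_gen_right ?_ ?_ ?_ ?_ ?_⟩ <;> simp

lemma Sim.hnnReducedWord (h : Sim φ w w') (hw : HNNReducedWord UA UB w) :
    HNNReducedWord UA UB w' := by
  induction h with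
  | refl => exact hw
  | tail _ hstep ih => exact hstep.hnnReducedWord ih

lemma Sim.symm (h : Sim φ w w') : Sim φ w' w := by
  induction h with
  | refl => exact .refl
  | tail _ hstep ih =>
    obtain ⟨q, r, a, ha, hqr⟩ := hstep
    exact .head ⟨q, r, a, ha, by tauto⟩ ih

end Semicommutation

section Counting

def genCount (w : List (HLetter X)) : ℕ :=
  w.countP fun l => match l with
    | HLetter.gen _ => true
    | _ => false

@[simp] lemma genCount_nil : genCount ([] : List (HLetter X)) = 0 := rfl

@[simp] lemma genCount_cons_gen (u : FreeGroup X) (w : List (HLetter X)) :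
    genCount (HLetter.gen u :: w) = genCount w + 1 := by
  simp [genCount]

@[simp] lemma genCount_cons_t (w : List (HLetter X)) :
    genCount (HLetter.t :: w) = genCount w := by
  simp [genCount]

@[simp] lemma genCount_cons_tinv (w : List (HLetter X)) :
    genCount (HLetter.tinv :: w) = genCount w := by
  simp [genCount]

@[simp] lemma genCount_append (w w' : List (HLetter X)) :
    genCount (w ++ w') = genCount w + genCount w' := by
  simp [genCount]

@[simp] lemma genCount_tPow (n : ℤ) : genCount (tPow (X := X) n) = 0 := by
  unfold tPow genCount
  split <;> simp [List.countP_replicate]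

variable {UA UB : Set (FreeGroup X)} {φ : ↥(Subgroup.closure UA) ≃* ↥(Subgroup.closure UB)}
  {w w' : List (HLetter X)}

lemma ElemSemi.genCount_eq (h : ElemSemi φ w w') : genCount w = genCount w' := by
  obtain ⟨q, r, a, -, hqr⟩ := h
  rcases hqr with ⟨rfl, rfl⟩ | ⟨rfl, rfl⟩ | ⟨rfl, rfl⟩ | ⟨rfl, rfl⟩ <;> simp

lemma Sim.genCount_eq (h : Sim φ w w') : genCount w = genCount w' := by
  induction h with
  | refl => rfl
  | tail _ hstep ih => exact ih.trans hstep.genCount_eq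

end Counting

section StablePowers

@[simp] lemma tPow_zero : tPow (X := X) 0 = [] := by simp [tPow]

lemma tPow_add {a b : ℤ} (h : 0 ≤ a * b) : tPow (X := X) a ++ tPow b = tPow (a + b) := by
  unfold tPow
  rcases Int.mul_nonneg_iff.mp h with ⟨ha, hb⟩ | ⟨ha, hb⟩
  · rw [if_pos ha, if_pos hb, if_pos (by omega), ← List.replicate_add]
    congr 1
    omega
  · rcases ha.eq_or_lt with rfl | ha
    · simp
    rcases hb.eq_or_lt with rfl | hb
    · simp
    rw [if_neg (by omega), if_neg (by omega), if_neg (by omega), ← List.replicate_add]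
    congr 1
    omega

lemma exists_tPow_of_pos {n : ℤ} (h : 0 < n) :
    ∃ l, tPow (X := X) n = l ++ [HLetter.t] ∧ tPow (X := X) n = HLetter.t :: l := by
  obtain ⟨k, hk⟩ : ∃ k, n.toNat = k + 1 := ⟨n.toNat - 1, by omega⟩
  exact ⟨List.replicate k HLetter.t, by simp [tPow, h.le, hk, List.replicate_succ'],
    by simp [tPow, h.le, hk, List.replicate_succ]⟩

lemma exists_tPow_of_neg {n : ℤ} (h : n < 0) :
    ∃ l, tPow (X := X) n = l ++ [HLetter.tinv] ∧ tPow (X := X) n = HLetter.tinv :: l := by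
  obtain ⟨k, hk⟩ : ∃ k, (-n).toNat = k + 1 := ⟨(-n).toNat - 1, by omega⟩
  exact ⟨List.replicate k HLetter.tinv, by simp [tPow, h.not_ge, hk, List.replicate_succ'],
    by simp [tPow, h.not_ge, hk, List.replicate_succ]⟩

/- The stable letters on the two sides of a cancelling pair `u u⁻¹` point the same way,
since `t u u⁻¹ t⁻¹` and `t⁻¹ u u⁻¹ t` are pinches. -/
lemma HNNReducedWord.tPow_append_tPow {UA UB : Set (FreeGroup X)} {w W₁ W₂ : List (HLetter X)}
    {a b : ℤ} {u : FreeGroup X} (hw : HNNReducedWord UA UB w)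
    (hsplit : w = W₁ ++ tPow a ++ [HLetter.gen u, HLetter.gen u⁻¹] ++ tPow b ++ W₂) :
    (tPow a : List (HLetter X)) ++ tPow b = tPow (a + b) := by
  refine tPow_add (not_lt.mp fun hab ↦ ?_)
  rcases Int.mul_neg_iff.mp hab with ⟨ha, hb⟩ | ⟨ha, hb⟩
  · obtain ⟨l₁, hl₁, -⟩ := exists_tPow_of_pos (X := X) ha
    obtain ⟨l₂, -, hl₂⟩ := exists_tPow_of_neg (X := X) hb
    exact hw.2 (W₁ ++ l₁) [HLetter.gen u, HLetter.gen u⁻¹] (l₂ ++ W₂) (by simp [hsplit, hl₁, hl₂])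
      (by simp) (by simp)
  · obtain ⟨l₁, hl₁, -⟩ := exists_tPow_of_neg (X := X) ha
    obtain ⟨l₂, -, hl₂⟩ := exists_tPow_of_pos (X := X) hb
    exact hw.1 (W₁ ++ l₁) [HLetter.gen u, HLetter.gen u⁻¹] (l₂ ++ W₂) (by simp [hsplit, hl₁, hl₂])
      (by simp) (by simp)

end StablePowers

section Erasure

/-- Erases the group letters with indices `m` and `m + 1`, the group letters of the word being
numbered consecutively from `k` on. -/
def eraseGenPair (m : ℕ) : ℕ → List (HLetter X) → List (HLetter X)
  | _, [] => []
  | k, HLetter.gen u :: w =>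
      (if k = m ∨ k = m + 1 then [] else [HLetter.gen u]) ++ eraseGenPair m (k + 1) w
  | k, HLetter.t :: w => HLetter.t :: eraseGenPair m k w
  | k, HLetter.tinv :: w => HLetter.tinv :: eraseGenPair m k w

variable {m k : ℕ}

lemma eraseGenPair_append (w w' : List (HLetter X)) :
    eraseGenPair m k (w ++ w') = eraseGenPair m k w ++ eraseGenPair m (k + genCount w) w' := by
  induction w generalizing k with
  | nil => simp [eraseGenPair]
  | cons l w ih => cases l <;> simp [eraseGenPair, ih, Nat.add_right_comm, Nat.add_assoc]

lemma eraseGenPair_sublist (w : List (HLetter X)) : (eraseGenPair m k w).Sublist w := by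
  induction w generalizing k with
  | nil => exact .slnil
  | cons l w ih =>
    cases l with
    | gen u =>
      rw [eraseGenPair]
      split_ifs
      · exact ih.cons _
      · exact ih.cons_cons _
    | t => exact ih.cons_cons _
    | tinv => exact ih.cons_cons _

lemma WordOver.eraseGenPair {V : Set (FreeGroup X)} {w : List (HLetter X)} (h : WordOver V w)
    (m k : ℕ) : WordOver V (eraseGenPair m k w) :=
  fun l hl ↦ h l ((eraseGenPair_sublist w).subset hl)

lemma eraseGenPair_eq_self {w : List (HLetter X)}
    (h : ∀ j, k ≤ j → j < k + genCount w → j ≠ m ∧ j ≠ m + 1) : eraseGenPair m k w = w := by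
  induction w generalizing k with
  | nil => rfl
  | cons l w ih =>
    cases l with
    | gen u =>
      have hk := h k le_rfl (by simp)
      rw [eraseGenPair, ih fun j h₁ h₂ ↦ h j (by omega) (by simp; omega)]
      simp [hk]
    | t => simp [eraseGenPair, ih (by simpa using h)]
    | tinv => simp [eraseGenPair, ih (by simpa using h)]

@[simp] lemma eraseGenPair_tPow (n : ℤ) : eraseGenPair m k (tPow (X := X) n) = tPow n :=
  eraseGenPair_eq_self fun j h₁ h₂ ↦ by simp at h₂; omega

variable {UA UB : Set (FreeGroup X)} {φ : ↥(Subgroup.closure UA) ≃* ↥(Subgroup.closure UB)}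
  {w w' : List (HLetter X)}

/- A semicommutation moves one group letter across a stable letter; erasing that group letter
makes the two sides equal, and otherwise the erasure leaves the semicommutation intact. -/
lemma ElemSemi.sim_eraseGenPair (h : ElemSemi φ w w') (m k : ℕ) :
    Sim φ (eraseGenPair m k w) (eraseGenPair m k w') := by
  obtain ⟨q, r, a, ha, hqr⟩ := h
  by_cases hj : k + genCount q = m ∨ k + genCount q = m + 1
  · rcases hqr with ⟨rfl, rfl⟩ | ⟨rfl, rfl⟩ | ⟨rfl, rfl⟩ | ⟨rfl, rfl⟩ <;>
      simpa [eraseGenPair_append, eraseGenPair, hj] using .refl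
  · refine .single ⟨eraseGenPair m k q, eraseGenPair m (k + genCount q + 1) r, a, ha, ?_⟩
    rcases hqr with ⟨rfl, rfl⟩ | ⟨rfl, rfl⟩ | ⟨rfl, rfl⟩ | ⟨rfl, rfl⟩ <;>
      simp [eraseGenPair_append, eraseGenPair, hj]

lemma Sim.eraseGenPair (h : Sim φ w w') (m k : ℕ) :
    Sim φ (eraseGenPair m k w) (eraseGenPair m k w') := by
  induction h with
  | refl => exact .refl
  | tail _ hstep ih => exact ih.trans (hstep.sim_eraseGenPair m k)

end Erasure

section Cancellation

@[simp] lemma genCount_blockWord (n₀ : ℤ) (l : List (FreeGroup X × ℤ)) :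
    genCount (blockWord n₀ l) = l.length := by
  induction l with
  | nil => simp [blockWord]
  | cons p l ih => simp_all [blockWord]

lemma eraseGenPair_blockWord (n₀ n' : ℤ) (u : FreeGroup X) (pre post : List (FreeGroup X × ℤ)) :
    eraseGenPair (pre.length + 1) 1 (blockWord n₀ (pre ++ [(u, 0), (u⁻¹, n')] ++ post)) =
      blockWord n₀ pre ++ tPow n' ++ blockWord 0 post := by
  have hpre := eraseGenPair_eq_self (m := pre.length + 1) (k := 1) (w := blockWord 0 pre)
    fun j h₁ h₂ ↦ by simp at h₂; omega
  have hpost := eraseGenPair_eq_self (m := pre.length + 1) (k := pre.length + 3)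
    (w := blockWord 0 post) fun j h₁ h₂ ↦ by omega
  have hcount := genCount_blockWord 0 pre
  simp only [blockWord, tPow_zero, List.nil_append] at hpre hpost hcount ⊢
  simp [eraseGenPair_append, eraseGenPair, hpre, hcount, Nat.add_comm 1, hpost]

variable {UA UB : Set (FreeGroup X)} {m : ℕ} {w v : List (HLetter X)}

lemma CancelAt.genCount_add_two (h : CancelAt m w v) : genCount v + 2 = genCount w := by
  obtain ⟨n₀, pre, post, u, n', -, rfl, ⟨rfl, rfl⟩ | ⟨pre', u', nl, rfl, rfl⟩⟩ := h <;> simp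
  omega

lemma CancelAt.eraseGenPair_eq (hw : HNNReducedWord UA UB w) (h : CancelAt m w v) :
    eraseGenPair m 1 w = v := by
  obtain ⟨n₀, pre, post, u, n', rfl, rfl, hv⟩ := h
  rw [eraseGenPair_blockWord]
  rcases hv with ⟨rfl, rfl⟩ | ⟨pre', u', nl, rfl, rfl⟩
  · have := hw.tPow_append_tPow (W₁ := []) (by simp [blockWord]; rfl)
    simp [blockWord, ← this]
  · have := hw.tPow_append_tPow (W₁ := blockWord n₀ pre' ++ [HLetter.gen u'])
      (by simp [blockWord]; rfl)
    simp [blockWord, ← this]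

end Cancellation

section Reduction

variable {UA UB : Set (FreeGroup X)} {φ : ↥(Subgroup.closure UA) ≃* ↥(Subgroup.closure UB)}
  {w v x : List (HLetter X)}

lemma Rsa.hnnReducedWord_right (h : Rsa φ w v) : HNNReducedWord UA UB v := by
  obtain ⟨m, w', v', -, hv', -, -, hv'v⟩ := h
  exact hv'v.hnnReducedWord hv'

lemma Rsa.genCount_lt (h : Rsa φ w v) : genCount v < genCount w := by
  obtain ⟨m, w', v', -, -, hww', hcan, hv'v⟩ := h
  have := hcan.genCount_add_two
  have := hww'.genCount_eq
  have := hv'v.genCount_eq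
  omega

lemma Rsa.exists_wordOver {V : Set (FreeGroup X)} (h : Rsa φ w v) (hw : WordOver V w) :
    ∃ v₀, WordOver V v₀ ∧ Rsa φ w v₀ := by
  obtain ⟨m, w', v', hw', hv', hww', hcan, -⟩ := h
  refine ⟨eraseGenPair m 1 w, hw.eraseGenPair m 1, m, w', v', hw', hv', hww', hcan, ?_⟩
  rw [← hcan.eraseGenPair_eq hw']
  exact (hww'.eraseGenPair m 1).symm

lemma Rsa.succsim_trans (h : Rsa φ w v) (h' : Succsim φ v x) : Succsim φ w x := by
  refine .inr ?_
  rcases h' with hvx | hvx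
  · obtain ⟨m, w', v', hw', hv', hww', hcan, hv'v⟩ := h
    exact .single ⟨m, w', v', hw', hv', hww', hcan, hv'v.trans hvx⟩
  · exact .head h hvx

end Reduction

end HnnPaper

theorem statement_16_general
    (X : Type*)
    (UA UB : Set (FreeGroup X))
    (φ : ↥(Subgroup.closure UA) ≃* ↥(Subgroup.closure UB))
    (w : List (HLetter X))
    (hwred : HNNReducedWord UA UB w)
    (V : Set (FreeGroup X)) (hw : WordOver V w) :
    ∃ v' : List (HLetter X), WordOver V v' ∧ v' ∈ MRF φ w := by
  induction hn : genCount w using Nat.strong_induction_on generalizing w with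
  | _ n ih =>
    by_cases hstep : ∃ v, Rsa φ w v
    · obtain ⟨v, hv⟩ := hstep
      obtain ⟨v₀, hv₀, hwv₀⟩ := hv.exists_wordOver hw
      obtain ⟨v', hv', hv₀v', hmost⟩ :=
        ih _ (hn ▸ hwv₀.genCount_lt) v₀ hwv₀.hnnReducedWord_right hv₀ rfl
      exact ⟨v', hv', hwv₀.succsim_trans hv₀v', hmost⟩
    · exact ⟨w, hw, .inl .refl, hwred, fun v hv ↦ hstep ⟨v, hv⟩⟩

theorem statement_16
    (X : Type*) [Finite X]
    (UH UA UB : Set (FreeGroup X))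
    (hUH : IsFreeBasis UH) (hUAH : UA ⊆ UH) (hUBH : UB ⊆ UH)
    (φ : ↥(Subgroup.closure UA) ≃* ↥(Subgroup.closure UB))
    (hφ : ∀ a : ↥(Subgroup.closure UA), (a : FreeGroup X) ∈ UA ∪ UA⁻¹ ↔
      ((φ a : ↥(Subgroup.closure UB)) : FreeGroup X) ∈ UB ∪ UB⁻¹)
    (w : List (HLetter X))
    (hwred : HNNReducedWord UA UB w)
    (V : Set (FreeGroup X)) (hV : V ⊆ UH ∪ UH⁻¹) (hw : WordOver V w) :
    ∃ v' : List (HLetter X), WordOver V v' ∧ v' ∈ MRF φ w :=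
  statement_16_general X UA UB φ w hwred V hw
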